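/- If X and Y are path-connected normal spaces, then cat_m(X × Y) ≤ cat_m(X) + cat_m(Y). -/

import Mathlib

universe u

/-- The `n`-dimensional sphere (Mathlib, Dec 2024, `RelativeCWComplex.sphere`). -/
noncomputable def OldRelativeCWComplex.sphere (n : ℤ) : TopCat.{u} :=
  TopCat.of <| ULift <| Metric.sphere (0 : EuclideanSpace ℝ <| Fin <| (n + 1).toNat) 1

/-- The `n`-dimensional closed disk (Mathlib, Dec 2024, `RelativeCWComplex.disk`). -/
noncomputable def OldRelativeCWComplex.disk (n : ℤ) : TopCat.{u} :=
  TopCat.of <| ULift <| Metric.closedBall (0 : EuclideanSpace ℝ <| Fin <| n.toNat) 1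

/-- The inclusion of the `n`-sphere into the `(n + 1)`-disk. -/
noncomputable def OldRelativeCWComplex.sphereInclusion (n : ℤ) :
    OldRelativeCWComplex.sphere.{u} n ⟶ OldRelativeCWComplex.disk.{u} (n + 1) :=
  TopCat.ofHom ⟨ULift.up ∘ Set.inclusion Metric.sphere_subset_closedBall ∘ ULift.down,
    continuous_uliftUp.comp ((continuous_inclusion _).comp continuous_uliftDown)⟩

/-- `X'` is obtained from `X` by attaching generalized cells `f : S ⟶ D`. -/
structure OldRelativeCWComplex.AttachGeneralizedCells {S D : TopCat.{u}} (f : S ⟶ D)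
    (X X' : TopCat.{u}) where
  cells : Type u
  attachMaps : cells → (S ⟶ X)
  iso_pushout : X' ≅ CategoryTheory.Limits.pushout (CategoryTheory.Limits.Sigma.desc attachMaps)
    (CategoryTheory.Limits.Sigma.map fun _ ↦ f)

/-- `X'` is obtained from `X` by attaching `(n + 1)`-disks. -/
def OldRelativeCWComplex.AttachCells (n : ℤ) :=
  OldRelativeCWComplex.AttachGeneralizedCells (OldRelativeCWComplex.sphereInclusion.{u} n)

/-- Relative CW complex (Mathlib, Dec 2024, `RelativeCWComplex`). -/
structure OldRelativeCWComplex where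
  sk : ℕ → TopCat.{u}
  attachCells (n : ℕ) : OldRelativeCWComplex.AttachCells ((n : ℤ) - 1) (sk n) (sk (n + 1))

/-- CW complex (Mathlib, Dec 2024, `CWComplex`). -/
structure OldCWComplex extends OldRelativeCWComplex.{u} where
  isEmpty_sk_zero : IsEmpty (sk 0)

/-- Inclusion of `X` into `X'`. -/
noncomputable def OldRelativeCWComplex.AttachGeneralizedCells.inclusion {S D : TopCat.{u}}
    {f : S ⟶ D} {X X' : TopCat.{u}} (att : OldRelativeCWComplex.AttachGeneralizedCells f X X') :
    X ⟶ X' :=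
  CategoryTheory.CategoryStruct.comp (CategoryTheory.Limits.pushout.inl _ _) att.iso_pushout.inv

/-- Inclusion of `sk n` into `sk (n + 1)`. -/
noncomputable def OldRelativeCWComplex.skInclusion (X : OldRelativeCWComplex.{u}) (n : ℕ) :
    X.sk n ⟶ X.sk (n + 1) :=
  (X.attachCells n).inclusion

/-- The topological space of a relative CW complex. -/
noncomputable def OldRelativeCWComplex.toTopCat (X : OldRelativeCWComplex.{u}) : TopCat.{u} :=
  CategoryTheory.Limits.colimit (CategoryTheory.Functor.ofSequence X.skInclusion)

/-- The underlying topological space of a CW complex. -/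
abbrev CWSpace (K : OldCWComplex.{u}) : Type u := K.toOldRelativeCWComplex.toTopCat

/-- A CW complex has dimension at most `m` if it has no cells of dimension `> m`. -/
def CWDimLE (K : OldCWComplex.{u}) (m : ℕ) : Prop :=
  ∀ n : ℕ, m < n →
    IsEmpty (OldRelativeCWComplex.AttachGeneralizedCells.cells (K.toOldRelativeCWComplex.attachCells n))

/-- Hurewicz fibration: the homotopy lifting property with respect to all spaces. -/
def IsFibration {E B : Type u} [TopologicalSpace E] [TopologicalSpace B] (p : C(E, B)) : Prop :=
  ∀ (X : Type u) [TopologicalSpace X] (f : C(X, E)) (H : C(X × unitInterval, B)),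
    (∀ x, H (x, 0) = p (f x)) →
    ∃ H' : C(X × unitInterval, E), (∀ z, p (H' z) = H z) ∧ (∀ x, H' (x, 0) = f x)

/-- The inclusion of a subset as a continuous map. -/
def inclMap {X : Type u} [TopologicalSpace X] (U : Set X) : C(U, X) :=
  ⟨Subtype.val, continuous_subtype_val⟩

/-- Property `A_{m,p}`: every map into `U` from an `m`-dimensional CW complex lifts through `p`. -/
def LiftingProp {E B : Type u} [TopologicalSpace E] [TopologicalSpace B]
    (p : C(E, B)) (m : ℕ) (U : Set B) : Prop :=
  ∀ K : OldCWComplex.{u}, CWDimLE K m → ∀ φ : C(CWSpace K, U),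
    ∃ s : C(CWSpace K, E), ∀ x, p (s x) = (φ x : B)

/-- The `m`-sectional category of `p`, valued in `ℕ∞` (`⊤` if no finite cover exists). -/
noncomputable def secatm {E B : Type u} [TopologicalSpace E] [TopologicalSpace B]
    (p : C(E, B)) (m : ℕ) : ℕ∞ :=
  sInf ((fun n : ℕ => (n : ℕ∞)) ''
    {k : ℕ | ∃ U : Fin (k + 1) → Set B, (∀ i, IsOpen (U i)) ∧ (⋃ i, U i) = Set.univ ∧
      ∀ i, LiftingProp p m (U i)})

/-- The classical sectional category. -/
noncomputable def secat {E B : Type u} [TopologicalSpace E] [TopologicalSpace B]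
    (p : C(E, B)) : ℕ∞ :=
  sInf ((fun n : ℕ => (n : ℕ∞)) ''
    {k : ℕ | ∃ U : Fin (k + 1) → Set B, (∀ i, IsOpen (U i)) ∧ (⋃ i, U i) = Set.univ ∧
      ∀ i, ∃ s : C((U i : Set B), E), ∀ x, p (s x) = (x : B)})

/-- Property `B_m`. -/
def NullProp {X : Type u} [TopologicalSpace X] (m : ℕ) (U : Set X) : Prop :=
  ∀ K : OldCWComplex.{u}, CWDimLE K m → ∀ φ : C(CWSpace K, U),
    ((inclMap U).comp φ).Nullhomotopic

/-- The `m`-dimensional Lusternik–Schnirelmann category. -/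
noncomputable def catm (X : Type u) [TopologicalSpace X] (m : ℕ) : ℕ∞ :=
  sInf ((fun n : ℕ => (n : ℕ∞)) ''
    {k : ℕ | ∃ U : Fin (k + 1) → Set X, (∀ i, IsOpen (U i)) ∧ (⋃ i, U i) = Set.univ ∧
      ∀ i, NullProp m (U i)})

/-- Classical (normalized) LS category. -/
noncomputable def catLS (X : Type u) [TopologicalSpace X] : ℕ∞ :=
  sInf ((fun n : ℕ => (n : ℕ∞)) ''
    {k : ℕ | ∃ U : Fin (k + 1) → Set X, (∀ i, IsOpen (U i)) ∧ (⋃ i, U i) = Set.univ ∧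
      ∀ i, (inclMap (U i)).Nullhomotopic})

/-- Property `C_{m,f}`. -/
def NullPropMap {X Y : Type u} [TopologicalSpace X] [TopologicalSpace Y]
    (f : C(X, Y)) (m : ℕ) (U : Set X) : Prop :=
  ∀ K : OldCWComplex.{u}, CWDimLE K m → ∀ φ : C(CWSpace K, U),
    ((f.comp (inclMap U)).comp φ).Nullhomotopic

/-- The `m`-dimensional LS category of a map. -/
noncomputable def catmMap {X Y : Type u} [TopologicalSpace X] [TopologicalSpace Y]
    (f : C(X, Y)) (m : ℕ) : ℕ∞ :=
  sInf ((fun n : ℕ => (n : ℕ∞)) ''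
    {k : ℕ | ∃ U : Fin (k + 1) → Set X, (∀ i, IsOpen (U i)) ∧ (⋃ i, U i) = Set.univ ∧
      ∀ i, NullPropMap f m (U i)})

/-- Property `D_{m,f,g}`. -/
def DistProp {X Y : Type u} [TopologicalSpace X] [TopologicalSpace Y]
    (f g : C(X, Y)) (m : ℕ) (U : Set X) : Prop :=
  ∀ K : OldCWComplex.{u}, CWDimLE K m → ∀ φ : C(CWSpace K, U),
    ((f.comp (inclMap U)).comp φ).Homotopic ((g.comp (inclMap U)).comp φ)

/-- The `m`-homotopic distance. -/
noncomputable def homDistm {X Y : Type u} [TopologicalSpace X] [TopologicalSpace Y]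
    (f g : C(X, Y)) (m : ℕ) : ℕ∞ :=
  sInf ((fun n : ℕ => (n : ℕ∞)) ''
    {k : ℕ | ∃ U : Fin (k + 1) → Set X, (∀ i, IsOpen (U i)) ∧ (⋃ i, U i) = Set.univ ∧
      ∀ i, DistProp f g m (U i)})

open Set

lemma nullProp_mono {Z : Type u} [TopologicalSpace Z] {m : ℕ} {O U : Set Z} (h : O ⊆ U)
    (hU : NullProp m U) : NullProp m O := by
  intro K hK φ
  have key := hU K hK ⟨fun p => ⟨(φ p : Z), h (φ p).2⟩,
    (continuous_subtype_val.comp φ.continuous).subtype_mk _⟩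
  exact key

lemma nullProp_prod {X Y : Type u} [TopologicalSpace X] [TopologicalSpace Y] {m : ℕ}
    {U : Set X} {V : Set Y} (hU : NullProp m U) (hV : NullProp m V) :
    NullProp m (U ×ˢ V) := by
  intro K hK φ
  let φ₁ : C(CWSpace K, U) := ⟨fun p => ⟨(φ p : X × Y).1, (φ p).2.1⟩,
    ((continuous_fst.comp (continuous_subtype_val.comp φ.continuous))).subtype_mk _⟩
  let φ₂ : C(CWSpace K, V) := ⟨fun p => ⟨(φ p : X × Y).2, (φ p).2.2⟩,
    ((continuous_snd.comp (continuous_subtype_val.comp φ.continuous))).subtype_mk _⟩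
  obtain ⟨x₀, hx₀⟩ := hU K hK φ₁
  obtain ⟨y₀, hy₀⟩ := hV K hK φ₂
  obtain ⟨H₁⟩ := hx₀
  obtain ⟨H₂⟩ := hy₀
  refine ⟨(x₀, y₀), ⟨{ toFun := fun q => (H₁ q, H₂ q)
                       continuous_toFun := H₁.continuous.prodMk H₂.continuous
                       map_zero_left := fun p => ?_
                       map_one_left := fun p => ?_ }⟩⟩
  · show (H₁ (0, p), H₂ (0, p)) = _
    rw [H₁.apply_zero, H₂.apply_zero]
    rfl
  · show (H₁ (1, p), H₂ (1, p)) = _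
    rw [H₁.apply_one, H₂.apply_one]
    rfl

lemma nullProp_disjoint_iUnion {Z : Type u} [TopologicalSpace Z] [PathConnectedSpace Z]
    {m : ℕ} {ι : Type*} (O : ι → Set Z) (ho : ∀ i, IsOpen (O i))
    (hd : Pairwise (Function.onFun Disjoint O)) (hn : ∀ i, NullProp m (O i)) :
    NullProp m (⋃ i, O i) := by
  classical
  intro K hK φ
  obtain ⟨z₀⟩ : Nonempty Z := PathConnectedSpace.nonempty
  have hmem : ∀ p : CWSpace K, ∃ i, (φ p : Z) ∈ O i := fun p => Set.mem_iUnion.mp (φ p).2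
  choose idx hidx using hmem
  set Ks : ι → Set (CWSpace K) := fun i => (fun p => (φ p : Z)) ⁻¹' (O i) with hKs
  have hKsOpen : ∀ i, IsOpen (Ks i) :=
    fun i => (ho i).preimage (continuous_subtype_val.comp φ.continuous)
  have hKmem : ∀ p, p ∈ Ks (idx p) := fun p => hidx p
  have hKuniq : ∀ p i, p ∈ Ks i → idx p = i := by
    intro p i hp
    by_contra hne
    exact Set.disjoint_left.mp (hd hne) (hidx p) hp
  have hclopen : ∀ i, IsClopen (Ks i) := by
    intro i
    refine ⟨?_, hKsOpen i⟩
    rw [← isOpen_compl_iff]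
    have heq : (Ks i)ᶜ = ⋃ j ∈ ({i}ᶜ : Set ι), Ks j := by
      ext p
      simp only [Set.mem_compl_iff, Set.mem_iUnion, Set.mem_singleton_iff]
      constructor
      · intro hp
        exact ⟨idx p, fun h => hp (h ▸ hKmem p), hKmem p⟩
      · rintro ⟨j, hji, hpj⟩ hpi
        exact hji ((hKuniq p j hpj).symm.trans (hKuniq p i hpi))
    rw [heq]
    exact isOpen_biUnion fun j _ => hKsOpen j
  have key : ∀ i, ∃ G : C(unitInterval × CWSpace K, Z),
      (∀ p, p ∈ Ks i → G (0, p) = (φ p : Z)) ∧ (∀ p, G (1, p) = z₀) := by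
    intro i
    by_cases hne : (Ks i).Nonempty
    · obtain ⟨pc, hpc⟩ := hne
      have hpcO : (φ pc : Z) ∈ O i := hpc
      have humem : ∀ p, (if p ∈ Ks i then (φ p : Z) else (φ pc : Z)) ∈ O i := by
        intro p; by_cases h : p ∈ Ks i
        · rw [if_pos h]; exact h
        · rw [if_neg h]; exact hpcO
      have hucont : Continuous fun p => (if p ∈ Ks i then (φ p : Z) else (φ pc : Z)) := by
        refine Continuous.if ?_ (continuous_subtype_val.comp φ.continuous) continuous_const
        intro a ha
        rw [show {x | x ∈ Ks i} = Ks i from rfl, (hclopen i).frontier_eq] at ha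
        exact absurd ha (Set.notMem_empty a)
      let ψ : C(CWSpace K, O i) := ⟨fun p => ⟨_, humem p⟩, hucont.subtype_mk humem⟩
      obtain ⟨c, hc⟩ := hn i K hK ψ
      obtain ⟨F⟩ := hc
      let γ := (PathConnectedSpace.joined c z₀).somePath
      let F2 : ContinuousMap.Homotopy (ContinuousMap.const (CWSpace K) c) (ContinuousMap.const (CWSpace K) z₀) :=
        { toFun := fun q => γ q.1
          continuous_toFun := γ.continuous.comp continuous_fst
          map_zero_left := fun _ => γ.source
          map_one_left := fun _ => γ.target }
      let F3 := F.trans F2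
      refine ⟨F3.toContinuousMap, fun p hp => ?_, fun p => ?_⟩
      · have h0 : F3 (0, p) = ((inclMap (O i)).comp ψ) p := F3.apply_zero p
        have : ((inclMap (O i)).comp ψ) p = (if p ∈ Ks i then (φ p : Z) else (φ pc : Z)) := rfl
        rw [show F3.toContinuousMap (0, p) = F3 (0, p) from rfl, h0, this, if_pos hp]
      · exact F3.apply_one p
    · refine ⟨ContinuousMap.const _ z₀, fun p hp => absurd ⟨p, hp⟩ hne, fun p => rfl⟩
  choose G hG0 hG1 using key
  have hHcont : Continuous fun q : unitInterval × CWSpace K => G (idx q.2) q := by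
    rw [continuous_iff_continuousAt]
    intro q
    have hq : (univ : Set unitInterval) ×ˢ Ks (idx q.2) ∈ nhds q :=
      (isOpen_univ.prod (hKsOpen _)).mem_nhds ⟨mem_univ _, hKmem q.2⟩
    refine ContinuousAt.congr ((G (idx q.2)).continuous.continuousAt) ?_
    filter_upwards [hq] with q' hq'
    rw [hKuniq q'.2 _ hq'.2]
  exact ⟨z₀, ⟨{ toFun := fun q => G (idx q.2) q
                continuous_toFun := hHcont
                map_zero_left := fun p => hG0 (idx p) p (hKmem p)
                map_one_left := fun p => hG1 (idx p) p }⟩⟩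

instance prodPathConnected {X Y : Type u} [TopologicalSpace X] [TopologicalSpace Y]
    [PathConnectedSpace X] [PathConnectedSpace Y] : PathConnectedSpace (X × Y) where
  nonempty := ⟨((PathConnectedSpace.nonempty (X := X)).some, (PathConnectedSpace.nonempty (X := Y)).some)⟩
  joined := fun x y => ⟨((PathConnectedSpace.joined x.1 y.1).somePath.prod
      (PathConnectedSpace.joined x.2 y.2).somePath).cast rfl rfl⟩

lemma cover_prod {X Y : Type u} [TopologicalSpace X] [TopologicalSpace Y]
    [NormalSpace X] [NormalSpace Y] [PathConnectedSpace X] [PathConnectedSpace Y]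
    (m p q : ℕ)
    (U : Fin (p+1) → Set X) (hUo : ∀ i, IsOpen (U i)) (hUc : (⋃ i, U i) = univ)
    (hUn : ∀ i, NullProp m (U i))
    (V : Fin (q+1) → Set Y) (hVo : ∀ j, IsOpen (V j)) (hVc : (⋃ j, V j) = univ)
    (hVn : ∀ j, NullProp m (V j)) :
    ∃ W : Fin (p+q+1) → Set (X × Y), (∀ n, IsOpen (W n)) ∧ (⋃ n, W n) = univ ∧
      ∀ n, NullProp m (W n) := by
  classical
  -- shrink the covers
  obtain ⟨v, hvc, hvo, hvcl⟩ := exists_subset_iUnion_closure_subset isClosed_univ hUo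
      (fun x _ => Set.toFinite _) (by rw [hUc])
  obtain ⟨w, hwc, hwo, hwcl⟩ := exists_subset_iUnion_closure_subset isClosed_univ hVo
      (fun x _ => Set.toFinite _) (by rw [hVc])
  -- Urysohn bump functions
  have hf : ∀ i, ∃ f : C(X, ℝ), EqOn f 0 (U i)ᶜ ∧ EqOn f 1 (closure (v i)) ∧
      ∀ x, f x ∈ Icc (0:ℝ) 1 := fun i =>
    exists_continuous_zero_one_of_isClosed (hUo i).isClosed_compl isClosed_closure
      (Set.disjoint_left.mpr fun x hx hx2 => hx (hvcl i hx2))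
  choose f hf0 hf1 hf01 using hf
  have hg : ∀ j, ∃ g : C(Y, ℝ), EqOn g 0 (V j)ᶜ ∧ EqOn g 1 (closure (w j)) ∧
      ∀ y, g y ∈ Icc (0:ℝ) 1 := fun j =>
    exists_continuous_zero_one_of_isClosed (hVo j).isClosed_compl isClosed_closure
      (Set.disjoint_left.mpr fun y hy hy2 => hy (hwcl j hy2))
  choose g hg0 hg1 hg01 using hg
  -- pieces
  let piece : Finset (Fin (p+1)) → Finset (Fin (q+1)) → Set (X × Y) := fun A B =>
    {z | ∀ i ∈ A, ∀ j ∈ B, 0 < f i z.1 * g j z.2 ∧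
        ∀ i' j', ¬(i' ∈ A ∧ j' ∈ B) → f i' z.1 * g j' z.2 < f i z.1 * g j z.2}
  have hcont : ∀ (i : Fin (p+1)) (j : Fin (q+1)),
      Continuous fun z : X × Y => f i z.1 * g j z.2 := fun i j =>
    ((f i).continuous.comp continuous_fst).mul ((g j).continuous.comp continuous_snd)
  have hpieceOpen : ∀ A B, IsOpen (piece A B) := by
    intro A B
    have heq : piece A B = ⋂ i ∈ A, ⋂ j ∈ B,
        ({z : X × Y | 0 < f i z.1 * g j z.2} ∩
         ⋂ i', ⋂ j', ⋂ (_ : ¬(i' ∈ A ∧ j' ∈ B)),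
           {z : X × Y | f i' z.1 * g j' z.2 < f i z.1 * g j z.2}) := by
      ext z
      simp only [piece, Set.mem_setOf_eq, Set.mem_iInter, Set.mem_inter_iff]
    rw [heq]
    refine isOpen_biInter_finset fun i _ => isOpen_biInter_finset fun j _ => ?_
    refine (isOpen_lt continuous_const (hcont i j)).inter ?_
    refine isOpen_iInter_of_finite fun i' => isOpen_iInter_of_finite fun j' => ?_
    refine isOpen_iInter_of_finite fun _ => isOpen_lt (hcont i' j') (hcont i j)
  -- piece is inside a product
  have hpieceSub : ∀ A B, A.Nonempty → B.Nonempty → ∃ i j, piece A B ⊆ U i ×ˢ V j := by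
    rintro A B ⟨i, hi⟩ ⟨j, hj⟩
    refine ⟨i, j, fun z hz => ?_⟩
    have hpos := (hz i hi j hj).1
    have hfx : 0 < f i z.1 ∧ 0 < g j z.2 := by
      rcases mul_pos_iff.mp hpos with h | h
      · exact h
      · have := (hf01 i z.1).1; linarith [h.1]
    constructor
    · by_contra hx
      have := hf0 i (show z.1 ∈ (U i)ᶜ from hx)
      simp only [Pi.zero_apply] at this
      linarith [hfx.1]
    · by_contra hy
      have := hg0 j (show z.2 ∈ (V j)ᶜ from hy)
      simp only [Pi.zero_apply] at this
      linarith [hfx.2]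
  -- disjointness of distinct pieces of the same rank
  have hdisj : ∀ (A A' : Finset (Fin (p+1))) (B B' : Finset (Fin (q+1))),
      A.Nonempty → B.Nonempty → A'.Nonempty → B'.Nonempty →
      A.card + B.card = A'.card + B'.card → (A ≠ A' ∨ B ≠ B') →
      piece A B ∩ piece A' B' = ∅ := by
    intro A A' B B' hA hB hA' hB' hcard hne
    by_cases h1 : A ⊆ A' ∧ B ⊆ B'
    · have hca := Finset.card_le_card h1.1
      have hcb := Finset.card_le_card h1.2
      have : A = A' := Finset.eq_of_subset_of_card_le h1.1 (by omega)
      have : B = B' := Finset.eq_of_subset_of_card_le h1.2 (by omega)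
      rcases hne with h | h <;> [exact absurd ‹A = A'› h; exact absurd ‹B = B'› h]
    by_cases h2 : A' ⊆ A ∧ B' ⊆ B
    · have hca := Finset.card_le_card h2.1
      have hcb := Finset.card_le_card h2.2
      have : A' = A := Finset.eq_of_subset_of_card_le h2.1 (by omega)
      have : B' = B := Finset.eq_of_subset_of_card_le h2.2 (by omega)
      rcases hne with h | h <;> [exact absurd ‹A' = A›.symm h; exact absurd ‹B' = B›.symm h]
    -- get witnesses
    have hw1 : ∃ i j, i ∈ A ∧ j ∈ B ∧ ¬(i ∈ A' ∧ j ∈ B') := by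
      rcases not_and_or.mp h1 with h | h
      · obtain ⟨i, hi, hi'⟩ := Finset.not_subset.mp h
        obtain ⟨j, hj⟩ := hB
        exact ⟨i, j, hi, hj, fun hc => hi' hc.1⟩
      · obtain ⟨j, hj, hj'⟩ := Finset.not_subset.mp h
        obtain ⟨i, hi⟩ := hA
        exact ⟨i, j, hi, hj, fun hc => hj' hc.2⟩
    have hw2 : ∃ i j, i ∈ A' ∧ j ∈ B' ∧ ¬(i ∈ A ∧ j ∈ B) := by
      rcases not_and_or.mp h2 with h | h
      · obtain ⟨i, hi, hi'⟩ := Finset.not_subset.mp h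
        obtain ⟨j, hj⟩ := hB'
        exact ⟨i, j, hi, hj, fun hc => hi' hc.1⟩
      · obtain ⟨j, hj, hj'⟩ := Finset.not_subset.mp h
        obtain ⟨i, hi⟩ := hA'
        exact ⟨i, j, hi, hj, fun hc => hj' hc.2⟩
    obtain ⟨i, j, hi, hj, hnij⟩ := hw1
    obtain ⟨i', j', hi', hj', hnij'⟩ := hw2
    ext z
    simp only [Set.mem_inter_iff, Set.mem_empty_iff_false, iff_false, not_and]
    intro hz hz'
    have l1 := (hz i hi j hj).2 i' j' hnij'
    have l2 := (hz' i' hi' j' hj').2 i j hnij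
    linarith
  -- the cover
  refine ⟨fun n => ⋃ (ab : {AB : Finset (Fin (p+1)) × Finset (Fin (q+1)) //
      AB.1.Nonempty ∧ AB.2.Nonempty ∧ AB.1.card + AB.2.card = (n : ℕ) + 2}),
      piece ab.1.1 ab.1.2, ?_, ?_, ?_⟩
  · exact fun n => isOpen_iUnion fun ab => hpieceOpen _ _
  · rw [Set.eq_univ_iff_forall]
    intro z
    -- max of f at z.1
    obtain ⟨i₀, hi₀⟩ := Finite.exists_max fun i => f i z.1
    obtain ⟨j₀, hj₀⟩ := Finite.exists_max fun j => g j z.2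
    set Mx := f i₀ z.1 with hMx
    set My := g j₀ z.2 with hMy
    have hMx1 : 1 ≤ Mx := by
      have : z.1 ∈ ⋃ i, v i := hvc (mem_univ _)
      obtain ⟨i, hi⟩ := Set.mem_iUnion.mp this
      have := hf1 i (subset_closure hi)
      simp only [Pi.one_apply] at this
      calc (1:ℝ) = f i z.1 := this.symm
        _ ≤ Mx := hi₀ i
    have hMy1 : 1 ≤ My := by
      have : z.2 ∈ ⋃ j, w j := hwc (mem_univ _)
      obtain ⟨j, hj⟩ := Set.mem_iUnion.mp this
      have := hg1 j (subset_closure hj)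
      simp only [Pi.one_apply] at this
      calc (1:ℝ) = g j z.2 := this.symm
        _ ≤ My := hj₀ j
    set A : Finset (Fin (p+1)) := Finset.univ.filter (fun i => f i z.1 = Mx) with hA
    set B : Finset (Fin (q+1)) := Finset.univ.filter (fun j => g j z.2 = My) with hB
    have hmemA : ∀ i, i ∈ A ↔ f i z.1 = Mx := by
      intro i; simp [hA]
    have hmemB : ∀ j, j ∈ B ↔ g j z.2 = My := by
      intro j; simp [hB]
    have hAne : A.Nonempty := ⟨i₀, (hmemA i₀).mpr rfl⟩
    have hBne : B.Nonempty := ⟨j₀, (hmemB j₀).mpr rfl⟩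
    have hAcard : 1 ≤ A.card := Finset.card_pos.mpr hAne
    have hBcard : 1 ≤ B.card := Finset.card_pos.mpr hBne
    have hAcard' : A.card ≤ p + 1 := by
      calc A.card ≤ Finset.univ.card := Finset.card_le_univ A
        _ = p + 1 := by simp
    have hBcard' : B.card ≤ q + 1 := by
      calc B.card ≤ Finset.univ.card := Finset.card_le_univ B
        _ = q + 1 := by simp
    have hmem : z ∈ piece A B := by
      intro i hi j hj
      rw [hmemA] at hi; rw [hmemB] at hj
      rw [hi, hj]
      constructor
      · positivity
      · intro i' j' hne
        rcases not_and_or.mp hne with h | h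
        · rw [hmemA] at h
          have hlt : f i' z.1 < Mx := lt_of_le_of_ne (hi₀ i') h
          calc f i' z.1 * g j' z.2 ≤ f i' z.1 * My :=
                mul_le_mul_of_nonneg_left (hj₀ j') (hf01 i' z.1).1
            _ < Mx * My := by
                apply mul_lt_mul_of_pos_right hlt; linarith
        · rw [hmemB] at h
          have hlt : g j' z.2 < My := lt_of_le_of_ne (hj₀ j') h
          calc f i' z.1 * g j' z.2 ≤ Mx * g j' z.2 :=
                mul_le_mul_of_nonneg_right (hi₀ i') (hg01 j' z.2).1
            _ < Mx * My := by
                apply mul_lt_mul_of_pos_left hlt; linarith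
    refine Set.mem_iUnion.mpr ⟨⟨A.card + B.card - 2, by omega⟩, ?_⟩
    refine Set.mem_iUnion.mpr ⟨⟨(A, B), hAne, hBne, ?_⟩, hmem⟩
    simp only []
    omega
  · intro n
    refine nullProp_disjoint_iUnion _ (fun ab => hpieceOpen _ _) ?_ ?_
    · intro ab ab' hne
      have h1 := ab.2.1; have h2 := ab.2.2.1; have h3 := ab.2.2.2
      have h1' := ab'.2.1; have h2' := ab'.2.2.1; have h3' := ab'.2.2.2
      have hABne : ab.1.1 ≠ ab'.1.1 ∨ ab.1.2 ≠ ab'.1.2 := by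
        by_contra hc
        push_neg at hc
        exact hne (Subtype.ext (Prod.ext hc.1 hc.2))
      have := hdisj ab.1.1 ab'.1.1 ab.1.2 ab'.1.2 h1 h2 h1' h2' (by omega) hABne
      exact Set.disjoint_iff_inter_eq_empty.mpr this
    · intro ab
      obtain ⟨i, j, hsub⟩ := hpieceSub ab.1.1 ab.1.2 ab.2.1 ab.2.2.1
      exact nullProp_mono hsub (nullProp_prod (hUn i) (hVn j))

lemma catm_le_of_cover {X : Type u} [TopologicalSpace X] {m k : ℕ}
    (h : ∃ U : Fin (k+1) → Set X, (∀ i, IsOpen (U i)) ∧ (⋃ i, U i) = Set.univ ∧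
      ∀ i, NullProp m (U i)) :
    catm X m ≤ (k : ℕ∞) :=
  sInf_le ⟨k, h, rfl⟩

lemma exists_cover_of_catm_le {X : Type u} [TopologicalSpace X] {m p : ℕ}
    (h : catm X m ≤ (p : ℕ∞)) :
    ∃ U : Fin (p+1) → Set X, (∀ i, IsOpen (U i)) ∧ (⋃ i, U i) = Set.univ ∧
      ∀ i, NullProp m (U i) := by
  classical
  have hex : ∃ k, k ≤ p ∧ k ∈ {k : ℕ | ∃ U : Fin (k + 1) → Set X,
      (∀ i, IsOpen (U i)) ∧ (⋃ i, U i) = Set.univ ∧ ∀ i, NullProp m (U i)} := by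
    by_contra hc
    push_neg at hc
    have hbound : ((p : ℕ∞) + 1) ≤ catm X m := by
      apply le_sInf
      rintro b ⟨k, hk, rfl⟩
      have : p < k := by
        by_contra hk2
        exact hc k (le_of_not_gt hk2) hk
      have h2 : p + 1 ≤ k := this
      calc ((p:ℕ∞) + 1) = ((p+1 : ℕ) : ℕ∞) := by push_cast; ring
        _ ≤ (k : ℕ∞) := by exact_mod_cast h2
        _ = (fun n : ℕ => (n : ℕ∞)) k := rfl
    have : (p : ℕ∞) < (p : ℕ∞) + 1 := by
      exact_mod_cast Nat.lt_succ_self p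
    exact absurd (lt_of_lt_of_le this (hbound.trans h)) (lt_irrefl _)
  obtain ⟨k, hkp, U, hUo, hUc, hUn⟩ := hex
  refine ⟨fun i => U ⟨min i.val k, Nat.lt_succ_of_le (min_le_right _ _)⟩,
    fun i => hUo _, ?_, fun i => hUn _⟩
  rw [Set.eq_univ_iff_forall]
  intro x
  have : x ∈ ⋃ i, U i := hUc ▸ Set.mem_univ x
  obtain ⟨j, hj⟩ := Set.mem_iUnion.mp this
  refine Set.mem_iUnion.mpr ⟨⟨j.val, by omega⟩, ?_⟩
  have hjk : j.val ≤ k := Nat.lt_succ_iff.mp j.isLt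
  have : (⟨min j.val k, Nat.lt_succ_of_le (min_le_right _ _)⟩ : Fin (k+1)) = j := by
    apply Fin.ext
    simp [Nat.min_eq_left hjk]
  rw [this]
  exact hj


/-- Product inequality for the `m`-category. -/
theorem stmt10 (X Y : Type u) [TopologicalSpace X] [TopologicalSpace Y]
    [PathConnectedSpace X] [PathConnectedSpace Y] [NormalSpace X] [NormalSpace Y] (m : ℕ) :
    catm (X × Y) m ≤ catm X m + catm Y m := by
  rcases eq_or_ne (catm X m) ⊤ with hX | hX
  · rw [hX, top_add]; exact le_top
  rcases eq_or_ne (catm Y m) ⊤ with hY | hY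
  · rw [hY, add_top]; exact le_top
  obtain ⟨p, hp⟩ := WithTop.ne_top_iff_exists.mp hX
  obtain ⟨q, hq⟩ := WithTop.ne_top_iff_exists.mp hY
  obtain ⟨U, hUo, hUc, hUn⟩ := exists_cover_of_catm_le (le_of_eq hp.symm)
  obtain ⟨V, hVo, hVc, hVn⟩ := exists_cover_of_catm_le (le_of_eq hq.symm)
  have hW := cover_prod m p q U hUo hUc hUn V hVo hVc hVn
  have := catm_le_of_cover (X := X × Y) (m := m) (k := p + q) hW
  rw [← hp, ← hq]
  calc catm (X × Y) m ≤ ((p + q : ℕ) : ℕ∞) := this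
    _ = (p : ℕ∞) + (q : ℕ∞) := by push_cast; ring
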